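/- If for all (α,β,γ,δ) ∈ X⁴ and all nonnegative k,l the tail sums satisfy Σ^l_{γ,δ} ≥ Σ^{l+[α−γ]^+∨[δ−β]^+}_{α,β} and Σ^k_{α,β} ≥ Σ^{k+[γ−α]^+∨[β−δ]^+}_{γ,δ}, then for every (α,β,γ,δ) and nonnegative k,l with G^{k;l}_{α,β;γ,δ} > 0 one has −([α−γ]^+ ∨ [δ−β]^+) ≤ l−k ≤ [γ−α]^+ ∨ [β−δ]^+. -/

import Mathlib

/-!
A coupling rate is the minimum of two terms, and the one belonging to the larger index vanishes
as soon as that index overshoots the other by more than the allowed shift. Write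
`a = [α-γ]^+ ∨ [δ-β]^+` and `b = [γ-α]^+ ∨ [β-δ]^+`. If `l > k + b`, then
`Σ^{l-1}_{γ,δ} ≤ Σ^{k+b}_{γ,δ} ≤ Σ^k_{α,β}` (tails decrease, then the hypothesis), so the jump
`Γ^l_{γ,δ} = Σ^{l-1}_{γ,δ} - Σ^l_{γ,δ}` fits into the gap `Σ^k_{α,β} - Σ^l_{γ,δ}` and
`Γ^l_{γ,δ} - Γ^l_{γ,δ} ∧ (Σ^k_{α,β} - Σ^k_{α,β} ∧ Σ^l_{γ,δ}) = 0`. The case `k > l + a` is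
symmetric.
-/

noncomputable def tailSum (f : ℕ → ℝ) (k : ℕ) : ℝ :=
  ∑' j, if k < j then f j else 0

section TailSum

variable {f : ℕ → ℝ}

lemma Summable.tailSum_summand (hf : Summable f) (k : ℕ) :
    Summable fun j => if k < j then f j else 0 :=
  hf.summable_of_eq_zero_or_self fun j => by split_ifs <;> simp

lemma tailSum_antitone (hf0 : ∀ j, 0 ≤ f j) (hf : Summable f) : Antitone (tailSum f) := by
  intro k k' hkk'
  refine (hf.tailSum_summand k').tsum_le_tsum (fun j => ?_) (hf.tailSum_summand k)
  split_ifs <;> first | omega | simp [hf0 j]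

lemma tailSum_eq_add_tailSum_succ (hf : Summable f) (k : ℕ) :
    tailSum f k = f (k + 1) + tailSum f (k + 1) := by
  rw [tailSum, (hf.tailSum_summand k).tsum_eq_add_tsum_ite (k + 1), if_pos k.lt_succ_self]
  congr 1
  exact tsum_congr fun j => by split_ifs <;> first | omega | rfl

lemma sub_min_sub_min_tailSum_eq_zero (hf0 : ∀ j, 0 ≤ f j) (hf : Summable f) {k : ℕ} {t : ℝ}
    (h : tailSum f k ≤ t) :
    f (k + 1) - min (f (k + 1)) (t - min (tailSum f (k + 1)) t) = 0 := by
  have hstep := tailSum_eq_add_tailSum_succ hf k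
  have hgap : f (k + 1) ≤ t - tailSum f (k + 1) := by linarith
  rw [min_eq_left (by linarith [hf0 (k + 1)] : tailSum f (k + 1) ≤ t), min_eq_left hgap, sub_self]

end TailSum

theorem stmt19_general (Γ : ℤ → ℤ → ℕ → ℝ) (hΓpos : ∀ α β k, 0 ≤ Γ α β k)
    (hsum : ∀ α β, Summable (Γ α β))
    (S : ℤ → ℤ → ℕ → ℝ)
    (hS : ∀ α β k, S α β k = ∑' k' : ℕ, if k < k' then Γ α β k' else 0)
    (G : ℤ → ℤ → ℤ → ℤ → ℕ → ℕ → ℝ)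
    (hG : ∀ α β γ δ : ℤ, ∀ k l : ℕ, 1 ≤ k → 1 ≤ l → G α β γ δ k l =
      min (Γ α β k - min (Γ α β k) (S γ δ l - min (S α β k) (S γ δ l)))
          (Γ γ δ l - min (Γ γ δ l) (S α β k - min (S α β k) (S γ δ l))))
    (hGk0 : ∀ α β γ δ : ℤ, ∀ k : ℕ, 1 ≤ k → G α β γ δ k 0 =
      Γ α β k - min (Γ α β k) (S γ δ 0 - min (S α β k) (S γ δ 0)))
    (hG0l : ∀ α β γ δ : ℤ, ∀ l : ℕ, 1 ≤ l → G α β γ δ 0 l =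
      Γ γ δ l - min (Γ γ δ l) (S α β 0 - min (S α β 0) (S γ δ l)))
    (hyp : ∀ α β γ δ : ℤ, ∀ k l : ℕ,
      S α β (l + (max (max (α - γ) (δ - β)) 0).toNat) ≤ S γ δ l ∧
      S γ δ (k + (max (max (γ - α) (β - δ)) 0).toNat) ≤ S α β k) :
    ∀ α β γ δ : ℤ, ∀ k l : ℕ, 0 < G α β γ δ k l →
      -(max (max (α - γ) (δ - β)) 0) ≤ (l : ℤ) - k ∧
      (l : ℤ) - k ≤ max (max (γ - α) (β - δ)) 0 := by
  obtain rfl : S = fun α β => tailSum (Γ α β) := funext₂ fun α β => funext (hS α β)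
  beta_reduce at hG hGk0 hG0l hyp
  intro α β γ δ k l hpos
  have hk : k ≤ l + (max (max (α - γ) (δ - β)) 0).toNat := by
    by_contra! hlt
    obtain ⟨j, rfl⟩ := Nat.exists_eq_add_of_lt hlt
    have hjump := sub_min_sub_min_tailSum_eq_zero (hΓpos α β) (hsum α β)
      ((tailSum_antitone (hΓpos α β) (hsum α β) (Nat.le_add_right _ j)).trans (hyp α β γ δ 0 l).1)
    rcases l.eq_zero_or_pos with rfl | hl
    · exact hpos.ne' ((hGk0 _ _ _ _ _ (by omega)).trans hjump)
    · rw [hG _ _ _ _ _ _ (by omega) hl] at hpos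
      exact (hpos.trans_le (min_le_left _ _)).ne' hjump
  have hl : l ≤ k + (max (max (γ - α) (β - δ)) 0).toNat := by
    by_contra! hlt
    obtain ⟨j, rfl⟩ := Nat.exists_eq_add_of_lt hlt
    have hjump := sub_min_sub_min_tailSum_eq_zero (hΓpos γ δ) (hsum γ δ)
      ((tailSum_antitone (hΓpos γ δ) (hsum γ δ) (Nat.le_add_right _ j)).trans (hyp α β γ δ k 0).2)
    rw [min_comm (tailSum (Γ γ δ) _)] at hjump
    rcases k.eq_zero_or_pos with rfl | hk
    · exact hpos.ne' ((hG0l _ _ _ _ _ (by omega)).trans hjump)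
    · rw [hG _ _ _ _ _ _ hk (by omega)] at hpos
      exact (hpos.trans_le (min_le_right _ _)).ne' hjump
  omega

/-- Sufficient conditions on tail sums implying the 'no exchange of
discrepancies' property of the coupling. -/
theorem stmt19 (Γ : ℤ → ℤ → ℕ → ℝ) (hΓpos : ∀ α β k, 0 ≤ Γ α β k)
    (hsum : ∀ α β, Summable (Γ α β))
    (S : ℤ → ℤ → ℕ → ℝ)
    (hS : ∀ α β k, S α β k = ∑' k' : ℕ, if k < k' then Γ α β k' else 0)
    (G : ℤ → ℤ → ℤ → ℤ → ℕ → ℕ → ℝ)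
    (hG : ∀ α β γ δ : ℤ, ∀ k l : ℕ, 1 ≤ k → 1 ≤ l → G α β γ δ k l =
      min (Γ α β k - min (Γ α β k) (S γ δ l - min (S α β k) (S γ δ l)))
          (Γ γ δ l - min (Γ γ δ l) (S α β k - min (S α β k) (S γ δ l))))
    (hGk0 : ∀ α β γ δ : ℤ, ∀ k : ℕ, 1 ≤ k → G α β γ δ k 0 =
      Γ α β k - min (Γ α β k) (S γ δ 0 - min (S α β k) (S γ δ 0)))
    (hG0l : ∀ α β γ δ : ℤ, ∀ l : ℕ, 1 ≤ l → G α β γ δ 0 l =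
      Γ γ δ l - min (Γ γ δ l) (S α β 0 - min (S α β 0) (S γ δ l)))
    (hG00 : ∀ α β γ δ : ℤ, G α β γ δ 0 0 = 0)
    (hyp : ∀ α β γ δ : ℤ, ∀ k l : ℕ,
      S α β (l + (max (max (α - γ) (δ - β)) 0).toNat) ≤ S γ δ l ∧
      S γ δ (k + (max (max (γ - α) (β - δ)) 0).toNat) ≤ S α β k) :
    ∀ α β γ δ : ℤ, ∀ k l : ℕ, 0 < G α β γ δ k l →
      -(max (max (α - γ) (δ - β)) 0) ≤ (l : ℤ) - k ∧
      (l : ℤ) - k ≤ max (max (γ - α) (β - δ)) 0 :=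
  stmt19_general Γ hΓpos hsum S hS G hG hGk0 hG0l hyp
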